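/- arXiv:2006.00425 — 2 statements merged into one kernel-verified Lean document; each statement's English description precedes it below -/
import Mathlib

section
/- Let L > 0 and 0 < η ≤ 4^{1/3}/8 be reals. For k ≥ 0 set η_k = η/(L(k+4)^{1/3}) and β_k = (1 + 24η_k²L² − η_{k+1}/η_k)/(1 + 4η_k²L²). Then for every integer K ≥ 1, ∑_{k=0}^{K−1} β_k²/η_{k+1} ≤ 1152 η³ L (5/4)^{1/3} ( log(K+3) − log 3 ) + L/(3·9^{1/3} η). -/
/-!
Write `v_k = (k + 4)^{1/3}`, so that `η_k L = η / v_k` and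
`β_k = ((1 - v_k / v_{k+1}) + 24 η² / v_k²) / (1 + 4 η² / v_k²)`; hence
`β_k² ≤ 2 (1 - v_k / v_{k+1})² + 1152 η⁴ / v_k⁴`. After dividing by `η_{k+1} = η / (L v_{k+1})`,
the first part is at most `(L / 3η) (v_{k-1}^{-2} - v_k^{-2})`, because consecutive cubes
`v_{k-1}³, v_k³, v_{k+1}³` differ by `1`; the second is at most
`1152 η³ L (5/4)^{1/3} / (k + 4) ≤ 1152 η³ L (5/4)^{1/3} (log (k + 4) - log (k + 3))`, using
`v_{k+1} ≤ (5/4)^{1/3} v_k`. Both are increments of the potential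
`Φ x = 1152 η³ L (5/4)^{1/3} log x - (L / 3η) x^{-2/3}` from `x = k + 3` to `x = k + 4`, so the sum
telescopes to `Φ (K + 3) - Φ 3`.
-/

open Real

lemma one_div_add_one_le_log_add_one_sub_log {x : ℝ} (hx : 0 < x) :
    1 / (x + 1) ≤ log (x + 1) - log x := by
  have h := one_sub_inv_le_log_of_pos (by positivity : 0 < (x + 1) / x)
  rwa [log_div (by positivity) hx.ne', inv_div, one_sub_div (by positivity), add_sub_cancel_left] at h

lemma rpow_one_div_three_pow_three {x : ℝ} (hx : 0 ≤ x) : (x ^ ((1:ℝ)/3)) ^ 3 = x := by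
  rw [one_div]; exact_mod_cast rpow_inv_natCast_pow hx (by norm_num : 3 ≠ 0)

lemma rpow_one_div_three_div_pow_four_le {x : ℝ} (hx : 3 ≤ x) :
    (x + 2) ^ ((1:ℝ)/3) / ((x + 1) ^ ((1:ℝ)/3)) ^ 4
      ≤ (5 / 4 : ℝ) ^ ((1:ℝ)/3) * (log (x + 1) - log x) := by
  set v := (x + 1) ^ ((1:ℝ)/3)
  have hv : 0 < v := by positivity
  have hw : (x + 2) ^ ((1:ℝ)/3) ≤ (5 / 4 : ℝ) ^ ((1:ℝ)/3) * v := by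
    rw [← mul_rpow (by norm_num) (by linarith)]
    exact rpow_le_rpow (by linarith) (by linarith) (by norm_num)
  calc (x + 2) ^ ((1:ℝ)/3) / v ^ 4 ≤ (5 / 4 : ℝ) ^ ((1:ℝ)/3) * v / v ^ 4 := by gcongr
    _ = (5 / 4 : ℝ) ^ ((1:ℝ)/3) * (1 / v ^ 3) := by field_simp
    _ ≤ (5 / 4 : ℝ) ^ ((1:ℝ)/3) * (log (x + 1) - log x) := by
      rw [rpow_one_div_three_pow_three (by linarith)]
      gcongr
      exact one_div_add_one_le_log_add_one_sub_log (by linarith)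

section CubeRoots

variable {u v w : ℝ}

lemma sub_le_one_div_three_mul_sq (hu : 0 < u) (huv : u ≤ v) (h : v ^ 3 = u ^ 3 + 1) :
    v - u ≤ 1 / (3 * u ^ 2) := by
  rw [le_div_iff₀ (by positivity)]
  nlinarith [mul_nonneg (sq_nonneg (v - u)) (by linarith : 0 ≤ v + 2 * u)]

lemma two_div_three_mul_pow_five_le (hu : 0 < u) (huv : u ≤ v) (h : v ^ 3 = u ^ 3 + 1) :
    2 / (3 * v ^ 5) ≤ 1 / u ^ 2 - 1 / v ^ 2 := by
  have hv : 0 < v := hu.trans_le huv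
  have hgap : 1 ≤ (v - u) * (3 * v ^ 2) := by
    nlinarith [mul_nonneg (sub_nonneg.2 huv) (mul_nonneg hu.le (sub_nonneg.2 huv)),
      mul_nonneg (sub_nonneg.2 huv) (mul_nonneg (sub_nonneg.2 huv) (add_nonneg hu.le hv.le))]
  rw [div_sub_div _ _ (by positivity) (by positivity), div_le_div_iff₀ (by positivity) (by positivity)]
  calc 2 * (u ^ 2 * v ^ 2) ≤ (v + u) * v ^ 3 := by nlinarith [mul_le_mul huv huv hu.le hv.le]
    _ ≤ (v + u) * v ^ 3 * ((v - u) * (3 * v ^ 2)) := le_mul_of_one_le_right (by positivity) hgap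
    _ = (1 * v ^ 2 - u ^ 2 * 1) * (3 * v ^ 5) := by ring

lemma two_mul_sq_one_sub_div_mul_le (hu : 0 < u) (huv : u ≤ v) (hvw : v ≤ w)
    (hv : v ^ 3 = u ^ 3 + 1) (hw : w ^ 3 = v ^ 3 + 1) :
    2 * (1 - v / w) ^ 2 * w ≤ (1 / u ^ 2 - 1 / v ^ 2) / 3 := by
  have hv0 : 0 < v := hu.trans_le huv
  have hw0 : 0 < w := hv0.trans_le hvw
  have hgap : w - v ≤ 1 / (3 * v ^ 2) := sub_le_one_div_three_mul_sq hv0 hvw hw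
  calc 2 * (1 - v / w) ^ 2 * w = 2 * (w - v) ^ 2 / w := by field_simp
    _ ≤ 2 * (1 / (3 * v ^ 2)) ^ 2 / v := by gcongr
    _ = 2 / (3 * v ^ 5) / 3 := by field_simp
    _ ≤ (1 / u ^ 2 - 1 / v ^ 2) / 3 := by gcongr; exact two_div_three_mul_pow_five_le hu huv hv

end CubeRoots

lemma sq_div_one_add_four_mul_le {a r : ℝ} (ha : 0 ≤ a) (hr : r ≤ 1) :
    ((1 + 24 * a - r) / (1 + 4 * a)) ^ 2 ≤ 2 * (1 - r) ^ 2 + 1152 * a ^ 2 := by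
  have hnum : 0 ≤ 1 + 24 * a - r := by linarith
  have hle : (1 + 24 * a - r) / (1 + 4 * a) ≤ 1 + 24 * a - r := div_le_self hnum (by linarith)
  calc ((1 + 24 * a - r) / (1 + 4 * a)) ^ 2 ≤ ((1 - r) + 24 * a) ^ 2 := by
        gcongr
        linarith
    _ ≤ 2 * (1 - r) ^ 2 + 1152 * a ^ 2 := by nlinarith [sq_nonneg ((1 - r) - 24 * a)]

lemma pstorm_beta_sq_div_eq {L η v w : ℝ} (hL : 0 < L) (hη : 0 < η) (hv : 0 < v) (hw : 0 < w) :
    ((1 + 24 * (η / (L * v)) ^ 2 * L ^ 2 - η / (L * w) / (η / (L * v)))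
        / (1 + 4 * (η / (L * v)) ^ 2 * L ^ 2)) ^ 2 / (η / (L * w))
      = L / η * w * ((1 + 24 * (η ^ 2 / v ^ 2) - v / w) / (1 + 4 * (η ^ 2 / v ^ 2))) ^ 2 := by
  field_simp

noncomputable def pstormPotential (L η x : ℝ) : ℝ :=
  1152 * η ^ 3 * L * (5 / 4 : ℝ) ^ ((1:ℝ)/3) * log x - L / (3 * η) / (x ^ ((1:ℝ)/3)) ^ 2

lemma pstorm_beta_sq_div_le_potential_sub {L η x : ℝ} (hL : 0 < L) (hη : 0 < η) (hx : 3 ≤ x) :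
    ((1 + 24 * (η / (L * (x + 1) ^ ((1:ℝ)/3))) ^ 2 * L ^ 2
          - η / (L * (x + 2) ^ ((1:ℝ)/3)) / (η / (L * (x + 1) ^ ((1:ℝ)/3))))
        / (1 + 4 * (η / (L * (x + 1) ^ ((1:ℝ)/3))) ^ 2 * L ^ 2)) ^ 2
        / (η / (L * (x + 2) ^ ((1:ℝ)/3)))
      ≤ pstormPotential L η (x + 1) - pstormPotential L η x := by
  have hlogs := rpow_one_div_three_div_pow_four_le hx
  set u := x ^ ((1:ℝ)/3)
  set v := (x + 1) ^ ((1:ℝ)/3)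
  set w := (x + 2) ^ ((1:ℝ)/3)
  have hu : 0 < u := by positivity
  have hv : 0 < v := by positivity
  have hw : 0 < w := by positivity
  have huv : u ≤ v := rpow_le_rpow (by linarith) (by linarith) (by norm_num)
  have hvw : v ≤ w := rpow_le_rpow (by linarith) (by linarith) (by norm_num)
  have hv3 : v ^ 3 = u ^ 3 + 1 := by
    simp only [u, v, rpow_one_div_three_pow_three (by linarith : (0:ℝ) ≤ x),
      rpow_one_div_three_pow_three (by linarith : (0:ℝ) ≤ x + 1)]
  have hw3 : w ^ 3 = v ^ 3 + 1 := by
    simp only [v, w, rpow_one_div_three_pow_three (by linarith : (0:ℝ) ≤ x + 1),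
      rpow_one_div_three_pow_three (by linarith : (0:ℝ) ≤ x + 2)]; ring
  have hbeta := sq_div_one_add_four_mul_le (by positivity : 0 ≤ η ^ 2 / v ^ 2)
    (div_le_one_of_le₀ hvw hw.le)
  have hgap := two_mul_sq_one_sub_div_mul_le hu huv hvw hv3 hw3
  rw [pstorm_beta_sq_div_eq hL hη hv hw]
  calc L / η * w * ((1 + 24 * (η ^ 2 / v ^ 2) - v / w) / (1 + 4 * (η ^ 2 / v ^ 2))) ^ 2
      ≤ L / η * w * (2 * (1 - v / w) ^ 2 + 1152 * (η ^ 2 / v ^ 2) ^ 2) := by gcongr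
    _ = L / η * (2 * (1 - v / w) ^ 2 * w) + 1152 * η ^ 3 * L * (w / v ^ 4) := by
      field_simp
    _ ≤ L / η * ((1 / u ^ 2 - 1 / v ^ 2) / 3)
        + 1152 * η ^ 3 * L * ((5 / 4 : ℝ) ^ ((1:ℝ)/3) * (log (x + 1) - log x)) := by
      gcongr
    _ = pstormPotential L η (x + 1) - pstormPotential L η x := by
      simp only [pstormPotential]; field_simp; ring

lemma pstormPotential_sub_pstormPotential_three_le {L η x : ℝ} (hL : 0 < L) (hη : 0 < η) :
    pstormPotential L η x - pstormPotential L η 3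
      ≤ 1152 * η ^ 3 * L * (5 / 4 : ℝ) ^ ((1:ℝ)/3) * (log x - log 3)
        + L / (3 * (9 : ℝ) ^ ((1:ℝ)/3) * η) := by
  have h9 : (9 : ℝ) ^ ((1:ℝ)/3) = ((3 : ℝ) ^ ((1:ℝ)/3)) ^ 2 := by
    rw [sq, ← mul_rpow (by norm_num) (by norm_num)]; norm_num
  have h3 : L / (3 * η) / ((3 : ℝ) ^ ((1:ℝ)/3)) ^ 2 = L / (3 * (9 : ℝ) ^ ((1:ℝ)/3) * η) := by
    rw [h9]; field_simp
  have hx' : 0 ≤ L / (3 * η) / (x ^ ((1:ℝ)/3)) ^ 2 := by positivity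
  simp only [pstormPotential, h3]
  linarith

theorem pstorm_sum_beta_sq_over_eta_bound_general
    (L η : ℝ) (hL : 0 < L) (hη : 0 < η)
    (ηk βk : ℕ → ℝ)
    (hηk : ∀ k : ℕ, ηk k = η / (L * ((k:ℝ) + 4)^((1:ℝ)/3)))
    (hβk : ∀ k : ℕ, βk k =
      (1 + 24 * (ηk k)^2 * L^2 - ηk (k+1) / ηk k) / (1 + 4 * (ηk k)^2 * L^2))
    (K : ℕ) :
    ∑ k ∈ Finset.range K, (βk k)^2 / ηk (k+1)
      ≤ 1152 * η^3 * L * ((5:ℝ)/4)^((1:ℝ)/3) * (Real.log ((K:ℝ) + 3) - Real.log 3)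
        + L / (3 * (9:ℝ)^((1:ℝ)/3) * η) := by
  set Φ : ℕ → ℝ := fun k ↦ pstormPotential L η ((k : ℝ) + 3)
  have hstep (k : ℕ) : βk k ^ 2 / ηk (k + 1) ≤ Φ (k + 1) - Φ k := by
    have h := pstorm_beta_sq_div_le_potential_sub hL hη (le_add_of_nonneg_left k.cast_nonneg)
    rw [show (k : ℝ) + 3 + 1 = k + 4 by ring,
      show (k : ℝ) + 3 + 2 = ((k + 1 : ℕ) : ℝ) + 4 by push_cast; ring,
      ← hηk, ← hηk, ← hβk] at h
    convert h using 3
    push_cast; ring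
  calc ∑ k ∈ Finset.range K, βk k ^ 2 / ηk (k + 1)
      ≤ ∑ k ∈ Finset.range K, (Φ (k + 1) - Φ k) := Finset.sum_le_sum fun k _ ↦ hstep k
    _ = Φ K - Φ 0 := Finset.sum_range_sub Φ K
    _ ≤ _ := by simpa [Φ] using pstormPotential_sub_pstormPotential_three_le (x := (K : ℝ) + 3) hL hη

theorem pstorm_sum_beta_sq_over_eta_bound
    (L η : ℝ) (hL : 0 < L) (hη : 0 < η) (hη2 : η ≤ (4:ℝ)^((1:ℝ)/3) / 8)
    (ηk βk : ℕ → ℝ)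
    (hηk : ∀ k : ℕ, ηk k = η / (L * ((k:ℝ) + 4)^((1:ℝ)/3)))
    (hβk : ∀ k : ℕ, βk k =
      (1 + 24 * (ηk k)^2 * L^2 - ηk (k+1) / ηk k) / (1 + 4 * (ηk k)^2 * L^2))
    (K : ℕ) (hK : 1 ≤ K) :
    ∑ k ∈ Finset.range K, (βk k)^2 / ηk (k+1)
      ≤ 1152 * η^3 * L * ((5:ℝ)/4)^((1:ℝ)/3) * (Real.log ((K:ℝ) + 3) - Real.log 3)
        + L / (3 * (9:ℝ)^((1:ℝ)/3) * η) :=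
  pstorm_sum_beta_sq_over_eta_bound_general L η hL hη ηk βk hηk hβk K
end

section
/- For each integer k ≥ 0 let β_k = 3((k+3)^{1/3} − (k+2)^{1/3}), and define Γ_0 = 1 and Γ_k = ∏_{i=0}^{k−1}(1−β_i)² for k ≥ 1. Then for all integers K ≥ 1 and 0 ≤ k ≤ K−1, ∑_{j=k+1}^{K−1} Γ_j/Γ_k ≤ (1/2)(k+2)^{2/3} + (1/6)(k+2)^{1/3} + 1/36. -/
/-!
Since `1 - β ≤ exp (-β)` and `β_i < 1`, the ratio `Γ_j / Γ_k = ∏_{k ≤ i < j} (1 - β_i)²` is at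
most `exp (-2 ∑_{k ≤ i < j} β_i)`, and the `β_i` telescope: with `a_i = (i + 2)^{1/3}` the bound is
`exp (6 a_k - 6 a_j)`. Comparing with an integral, `∑_{j > k} exp (-6 a_j)` is at most
`∫_{k+2}^∞ exp (-6 s^{1/3}) ds = exp (-6 a_k) (a_k² / 2 + a_k / 6 + 1 / 36)`.
-/

open Real Finset

theorem prod_one_sub_sq_le_exp {ι : Type*} (s : Finset ι) {b : ι → ℝ} (hb : ∀ i ∈ s, b i ≤ 1) :
    ∏ i ∈ s, (1 - b i) ^ 2 ≤ exp (-2 * ∑ i ∈ s, b i) := by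
  rw [mul_sum, exp_sum]
  refine prod_le_prod (fun i _ => sq_nonneg _) fun i hi => ?_
  calc (1 - b i) ^ 2 ≤ exp (-b i) ^ 2 :=
        pow_le_pow_left₀ (sub_nonneg.2 (hb i hi)) (one_sub_le_exp_neg _) 2
    _ = exp (-2 * b i) := by rw [← exp_nat_mul]; ring_nf

theorem prod_range_div_prod_range_le_exp {b : ℕ → ℝ} (hb : ∀ i, b i < 1) {k j : ℕ} (hkj : k ≤ j) :
    (∏ i ∈ range j, (1 - b i) ^ 2) / ∏ i ∈ range k, (1 - b i) ^ 2
      ≤ exp (-2 * ∑ i ∈ Ico k j, b i) := by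
  have hpos : 0 < ∏ i ∈ range k, (1 - b i) ^ 2 :=
    prod_pos fun i _ => pow_pos (sub_pos.2 (hb i)) 2
  rw [← prod_range_mul_prod_Ico _ hkj, mul_div_cancel_left₀ _ hpos.ne']
  exact prod_one_sub_sq_le_exp _ fun i _ => (hb i).le

theorem rpow_one_third_pow_three {x : ℝ} (hx : 0 ≤ x) : (x ^ ((1:ℝ) / 3)) ^ 3 = x := by
  simpa using rpow_inv_natCast_pow (n := 3) hx (by norm_num)

theorem three_mul_rpow_one_third_succ_sub_lt_one {x : ℝ} (hx : 1 ≤ x) :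
    3 * ((x + 1) ^ ((1:ℝ) / 3) - x ^ ((1:ℝ) / 3)) < 1 := by
  set u := (x + 1) ^ ((1:ℝ) / 3)
  set v := x ^ ((1:ℝ) / 3)
  have hu : u ^ 3 = x + 1 := rpow_one_third_pow_three (by linarith)
  have hv : v ^ 3 = x := rpow_one_third_pow_three (by linarith)
  have hv1 : 1 ≤ v := one_le_rpow hx (by norm_num)
  have hvu : v < u := rpow_lt_rpow (by linarith) (by linarith) (by norm_num)
  -- `u - v = 1 / (u² + uv + v²)` and `u² + uv + v² > 3`
  nlinarith [mul_pos (sub_pos.2 hvu) (sub_pos.2 hvu), mul_le_mul hv1 hv1 zero_le_one (by linarith)]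

theorem sum_Ico_le_of_le_sub {f g : ℕ → ℝ} {m : ℕ} (hfg : ∀ j, m ≤ j → f j ≤ g j - g (j + 1))
    (hg : ∀ j, 0 ≤ g j) (n : ℕ) : ∑ j ∈ Ico m n, f j ≤ g m := by
  rcases le_or_gt m n with hmn | hnm
  · calc ∑ j ∈ Ico m n, f j ≤ ∑ j ∈ Ico m n, -(g (j + 1) - g j) :=
          sum_le_sum fun j hj => by linarith [hfg j (mem_Ico.1 hj).1]
      _ = g m - g n := by rw [sum_neg_distrib, sum_Ico_sub g hmn, neg_sub]
      _ ≤ g m := by linarith [hg n]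
  · rw [Ico_eq_empty_of_le hnm.le, sum_empty]
    exact hg m

/-- `∫ₓ^∞ exp (-6 s^{1/3}) ds`, computed by substituting `s = t³`. -/
noncomputable def expCbrtTail (x : ℝ) : ℝ :=
  exp (-6 * x ^ ((1:ℝ) / 3)) * ((x ^ ((1:ℝ) / 3)) ^ 2 / 2 + x ^ ((1:ℝ) / 3) / 6 + 1 / 36)

theorem hasDerivAt_expCbrtTail {x : ℝ} (hx : 0 < x) :
    HasDerivAt expCbrtTail (-exp (-6 * x ^ ((1:ℝ) / 3))) x := by
  have hφ (t : ℝ) : HasDerivAt (fun t => exp (-6 * t) * (t ^ 2 / 2 + t / 6 + 1 / 36))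
      (-3 * t ^ 2 * exp (-6 * t)) t := by
    refine (((hasDerivAt_id' t).const_mul (-6)).exp.fun_mul
      ((((hasDerivAt_pow 2 t).div_const 2).fun_add
        ((hasDerivAt_id' t).div_const 6)).add_const (1 / 36))).congr_deriv ?_
    ring
  have hcbrt := hasDerivAt_rpow_const (p := (1:ℝ) / 3) (Or.inl hx.ne')
  refine ((hφ _).comp x hcbrt).congr_deriv ?_
  have hcancel : x ^ ((1:ℝ) / 3 - 1) * (x ^ ((1:ℝ) / 3)) ^ 2 = 1 := by
    rw [sq, ← rpow_add hx, ← rpow_add hx]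
    norm_num
  linear_combination (-exp (-6 * x ^ ((1:ℝ) / 3))) * hcancel

theorem expCbrtTail_nonneg {x : ℝ} (hx : 0 ≤ x) : 0 ≤ expCbrtTail x := by
  have := rpow_nonneg hx ((1:ℝ) / 3)
  unfold expCbrtTail
  positivity

theorem exp_mul_expCbrtTail {x : ℝ} (hx : 0 ≤ x) :
    exp (6 * x ^ ((1:ℝ) / 3)) * expCbrtTail x
      = (1 / 2) * x ^ ((2:ℝ) / 3) + (1 / 6) * x ^ ((1:ℝ) / 3) + 1 / 36 := by
  have hsq : (x ^ ((1:ℝ) / 3)) ^ 2 = x ^ ((2:ℝ) / 3) := by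
    rw [← rpow_natCast, ← rpow_mul hx]
    norm_num
  rw [expCbrtTail, ← mul_assoc, ← exp_add, hsq, neg_mul, add_neg_cancel, exp_zero]
  ring

theorem exp_neg_six_rpow_le_expCbrtTail_sub {y : ℝ} (hy : 0 < y) :
    exp (-6 * (y + 1) ^ ((1:ℝ) / 3)) ≤ expCbrtTail y - expCbrtTail (y + 1) := by
  have hderiv : ∀ x ∈ Set.Icc y (y + 1),
      HasDerivAt expCbrtTail (-exp (-6 * x ^ ((1:ℝ) / 3))) x :=
    fun x hx => hasDerivAt_expCbrtTail (hy.trans_le hx.1)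
  have hmono : ∀ x ∈ interior (Set.Icc y (y + 1)),
      deriv expCbrtTail x ≤ -exp (-6 * (y + 1) ^ ((1:ℝ) / 3)) := by
    intro x hx
    rw [interior_Icc] at hx
    rw [(hderiv x (Set.Ioo_subset_Icc_self hx)).deriv, neg_le_neg_iff, exp_le_exp]
    have := rpow_le_rpow (hy.trans hx.1).le hx.2.le (by norm_num : (0:ℝ) ≤ 1 / 3)
    linarith
  have := (convex_Icc y (y + 1)).image_sub_le_mul_sub_of_deriv_le
    (fun x hx => (hderiv x hx).continuousAt.continuousWithinAt)
    (fun x hx => (hderiv x (interior_subset hx)).differentiableAt.differentiableWithinAt)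
    hmono y (Set.left_mem_Icc.2 (by linarith)) (y + 1) (Set.right_mem_Icc.2 (by linarith))
    (by linarith)
  linarith

theorem sum_Ico_exp_neg_six_rpow_le (m n : ℕ) :
    ∑ j ∈ Ico m n, exp (-6 * ((j:ℝ) + 2) ^ ((1:ℝ) / 3)) ≤ expCbrtTail ((m:ℝ) + 1) := by
  refine sum_Ico_le_of_le_sub (g := fun j => expCbrtTail ((j:ℝ) + 1)) (fun j _ => ?_)
    (fun j => expCbrtTail_nonneg (by positivity)) n
  have := exp_neg_six_rpow_le_expCbrtTail_sub (y := (j:ℝ) + 1) (by positivity)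
  rw [add_assoc, one_add_one_eq_two] at this
  rwa [Nat.cast_succ, add_assoc (j:ℝ) 1 1, one_add_one_eq_two]

theorem pstorm_gamma_ratio_sum_bound (β Γ : ℕ → ℝ)
    (hβ : ∀ k : ℕ, β k = 3 * (((k:ℝ) + 3)^((1:ℝ)/3) - ((k:ℝ) + 2)^((1:ℝ)/3)))
    (hΓ : ∀ k : ℕ, Γ k = ∏ i ∈ Finset.range k, (1 - β i)^2) :
    ∀ (K : ℕ), 1 ≤ K → ∀ k : ℕ, k ≤ K - 1 →
      ∑ j ∈ Finset.Ico (k+1) K, Γ j / Γ k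
        ≤ (1/2) * ((k:ℝ) + 2)^((2:ℝ)/3) + (1/6) * ((k:ℝ) + 2)^((1:ℝ)/3) + 1/36 := by
  intro K _ k _
  set a : ℕ → ℝ := fun i => ((i:ℝ) + 2) ^ ((1:ℝ) / 3)
  have hβa (i : ℕ) : β i = 3 * (a (i + 1) - a i) := by
    simp only [hβ, a]; push_cast; ring_nf
  have hβ_lt (i : ℕ) : β i < 1 := by
    rw [hβ, show (i:ℝ) + 3 = (i + 2) + 1 by ring]
    exact three_mul_rpow_one_third_succ_sub_lt_one (by linarith [i.cast_nonneg (α := ℝ)])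
  have hratio (j : ℕ) (hj : k ≤ j) : Γ j / Γ k ≤ exp (6 * a k) * exp (-6 * a j) := by
    rw [hΓ, hΓ, ← exp_add]
    refine (prod_range_div_prod_range_le_exp hβ_lt hj).trans_eq ?_
    simp only [hβa, ← mul_sum, sum_Ico_sub a hj]
    ring_nf
  calc ∑ j ∈ Ico (k + 1) K, Γ j / Γ k
      ≤ ∑ j ∈ Ico (k + 1) K, exp (6 * a k) * exp (-6 * a j) :=
        sum_le_sum fun j hj => hratio j (by linarith [(mem_Ico.1 hj).1])
    _ ≤ exp (6 * a k) * expCbrtTail ((k:ℝ) + 2) := by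
        rw [← mul_sum]
        refine mul_le_mul_of_nonneg_left ?_ (exp_nonneg _)
        have := sum_Ico_exp_neg_six_rpow_le (k + 1) K
        rwa [Nat.cast_succ, add_assoc (k:ℝ) 1 1, one_add_one_eq_two] at this
    _ = _ := exp_mul_expCbrtTail (by positivity)
end
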